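/- Let F ∈ ℂ[[λ,μ]] satisfy F(λ,μ) = F(μ,λ), F(λ,μ) = F(−λ,−μ), and F(λ,0) = 1 (where F(λ,0) denotes substitution μ ↦ 0). Then F satisfies the identity (λ+μ)·F(λ,μ) = λ·e^{μ}·F(μ,−λ−μ) + μ·e^{−λ}·F(λ,−λ−μ) in ℂ[[λ,μ]] if and only if there exists h ∈ ℂ[[λ,μ]] with h(λ,μ) = h(μ,λ) = h(−λ,−μ) = h(λ,−λ−μ), satisfying the boundary condition (e^{λ} − e^{−λ})·h(λ,0) = 2λ in ℂ[[λ]], such that 2(λ+μ)·F(λ,μ) = (e^{λ+μ} − e^{−λ−μ})·h(λ,μ). -/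

import Mathlib

noncomputable section

open Finset MvPowerSeries

/-- Total degree of a monomial in two variables. -/
def deg (d : Fin 2 →₀ ℕ) : ℕ := d 0 + d 1

/-- Formal substitution `f(p, q)` of two polynomials `p`, `q` with zero constant term
for the variables of a two-variable formal power series `f`: the coefficient of a
monomial `d` in `f(p,q)` is `∑_{i,j} (coeff of λ^i μ^j in f) ⬝ (coeff of d in pⁱ·qʲ)`,
a finite sum since `coeff d (pⁱ·qʲ) = 0` whenever `i + j > deg d`. -/
def sub2 (p q : MvPolynomial (Fin 2) ℂ) (f : MvPowerSeries (Fin 2) ℂ) :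
    MvPowerSeries (Fin 2) ℂ :=
  fun d => ∑ ij ∈ Finset.range (deg d + 1) ×ˢ Finset.range (deg d + 1),
    MvPowerSeries.coeff (Finsupp.single 0 ij.1 + Finsupp.single 1 ij.2) f *
      MvPolynomial.coeff d (p ^ ij.1 * q ^ ij.2)

/-- The formal exponential `exp g = ∑ₖ gᵏ/k!` of a two-variable formal power series `g`
with zero constant term. -/
def expMv (g : MvPowerSeries (Fin 2) ℂ) : MvPowerSeries (Fin 2) ℂ :=
  fun d => ∑ k ∈ Finset.range (deg d + 1), MvPowerSeries.coeff d (g ^ k) / (k.factorial : ℂ)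

/-- `f(μ, −λ−μ)`. -/
def s₁ (f : MvPowerSeries (Fin 2) ℂ) : MvPowerSeries (Fin 2) ℂ :=
  sub2 (MvPolynomial.X 1) (-MvPolynomial.X 0 - MvPolynomial.X 1) f

/-- `f(λ, −λ−μ)`. -/
def s₂ (f : MvPowerSeries (Fin 2) ℂ) : MvPowerSeries (Fin 2) ℂ :=
  sub2 (MvPolynomial.X 0) (-MvPolynomial.X 0 - MvPolynomial.X 1) f

/-- `f(μ, λ)`. -/
def swapS (f : MvPowerSeries (Fin 2) ℂ) : MvPowerSeries (Fin 2) ℂ :=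
  sub2 (MvPolynomial.X 1) (MvPolynomial.X 0) f

/-- `f(−λ, −μ)`. -/
def negS (f : MvPowerSeries (Fin 2) ℂ) : MvPowerSeries (Fin 2) ℂ :=
  sub2 (-MvPolynomial.X 0) (-MvPolynomial.X 1) f

/-- Equation (1.5b), the compressed hexagon equation:
`λμ(λ+μ)·( f(λ,μ) + e^{μ}·f(μ,−λ−μ) + e^{−λ}·f(λ,−λ−μ) ) = λ(e^{μ} − 1) + μ(e^{−λ} − 1)`. -/
def Eq15b (f : MvPowerSeries (Fin 2) ℂ) : Prop :=
  (X 0 : MvPowerSeries (Fin 2) ℂ) * X 1 * (X 0 + X 1) *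
      (f + expMv (X 1) * s₁ f + expMv (-X 0) * s₂ f)
    = X 0 * (expMv (X 1) - 1) + X 1 * (expMv (-X 0) - 1)

/-!
Write `S(x) = sinh x / x`, a unit power series with `e^x - e^{-x} = 2x S(x)`. Substitutions are
ring homomorphisms commuting with `exp` and `S`. Applying `(λ,μ) ↦ (-λ,-μ)` to the hexagon
equation and using that `F` is even gives the same equation with `e^{μ}, e^{-λ}` replaced by
`e^{-μ}, e^{λ}`; eliminating `F(μ,-λ-μ)` between the two leaves
`S(λ+μ) F(λ,-λ-μ) = S(μ) F(λ,μ)`. Hence `h = F / S(λ+μ)` is invariant under `(λ,μ) ↦ (λ,-λ-μ)`,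
inherits symmetry and evenness from `F`, and `F(λ,0) = 1` is the boundary condition.
Conversely, substituting `(μ,-λ-μ)` and `(λ,-λ-μ)` into `2(λ+μ) F = (e^{λ+μ} - e^{-λ-μ}) h`
expresses `2λ F(μ,-λ-μ)` and `2μ F(λ,-λ-μ)` through `h`, and `e^a e^b = e^{a+b}` turns their
combination into the hexagon equation.
-/

namespace MvPolynomial

variable {σ R : Type*} [CommRing R]

@[simp, norm_cast]
theorem coe_neg (φ : MvPolynomial σ R) : ((-φ : MvPolynomial σ R) : MvPowerSeries σ R) = -φ :=
  map_neg coeToMvPowerSeries.ringHom φ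

@[simp, norm_cast]
theorem coe_sub (φ ψ : MvPolynomial σ R) :
    ((φ - ψ : MvPolynomial σ R) : MvPowerSeries σ R) = φ - ψ :=
  map_sub coeToMvPowerSeries.ringHom φ ψ

end MvPolynomial

namespace MvPowerSeries

variable {σ τ R : Type*}

instance [Semiring R] [CharZero R] : CharZero (MvPowerSeries σ R) :=
  ⟨fun m n h => by simpa using congrArg constantCoeff h⟩

theorem X_ne_zero [Semiring R] [Nontrivial R] (s : σ) : (X s : MvPowerSeries σ R) ≠ 0 :=
  fun h => by simpa using congrArg (coeff (Finsupp.single s 1)) h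

theorem X_zero_add_X_one_ne_zero [Semiring R] [Nontrivial R] :
    (X 0 + X 1 : MvPowerSeries (Fin 2) R) ≠ 0 := fun h => by
  simpa [coeff_X, Finsupp.single_eq_single_iff] using congrArg (coeff (Finsupp.single 0 1)) h

theorem coeff_pow_of_degree_lt [CommSemiring R] {f : MvPowerSeries σ R}
    (hf : constantCoeff f = 0) {d : σ →₀ ℕ} {n : ℕ} (h : d.degree < n) :
    coeff d (f ^ n) = 0 :=
  coeff_of_lt_order ((Nat.cast_lt.2 h).trans_le (le_order_pow_of_constantCoeff_eq_zero n hf))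

theorem coeff_pow_mul_pow_of_degree_lt [CommSemiring R] {f g : MvPowerSeries σ R}
    (hf : constantCoeff f = 0) (hg : constantCoeff g = 0) {d : σ →₀ ℕ} {i j : ℕ}
    (h : d.degree < i + j) : coeff d (f ^ i * g ^ j) = 0 := by
  refine coeff_of_lt_order ((Nat.cast_lt.2 h).trans_le ?_)
  calc ((i + j : ℕ) : ℕ∞) ≤ (f ^ i).order + (g ^ j).order := by
        push_cast
        exact add_le_add (le_order_pow_of_constantCoeff_eq_zero i hf)
          (le_order_pow_of_constantCoeff_eq_zero j hg)
    _ ≤ (f ^ i * g ^ j).order := le_order_mul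

variable [CommRing R]

theorem subst_neg {a : σ → MvPowerSeries τ R} (ha : HasSubst a) (f : MvPowerSeries σ R) :
    subst a (-f) = -subst a f := by
  rw [← coe_substAlgHom ha, map_neg]

theorem subst_ofNat {a : σ → MvPowerSeries τ R} (ha : HasSubst a) (n : ℕ) [n.AtLeastTwo] :
    subst a (OfNat.ofNat n : MvPowerSeries σ R) = OfNat.ofNat n := by
  rw [← coe_substAlgHom ha, map_ofNat]

theorem hasSubst_pair {a b : MvPowerSeries τ R} (ha : constantCoeff a = 0)
    (hb : constantCoeff b = 0) : HasSubst ![a, b] :=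
  hasSubst_of_constantCoeff_zero (Fin.forall_fin_two.2 ⟨ha, hb⟩)

theorem subst_pair_X_zero_add_X_one {a b : MvPowerSeries τ R} (hab : HasSubst ![a, b]) :
    subst ![a, b] (X 0 + X 1 : MvPowerSeries (Fin 2) R) = a + b := by
  rw [subst_add hab, subst_X hab, subst_X hab]
  rfl

theorem subst_pair_subst_pair {a b : MvPowerSeries τ R} {c d : MvPowerSeries (Fin 2) R}
    (hab : HasSubst ![a, b]) (hcd : HasSubst ![c, d]) (f : MvPowerSeries (Fin 2) R) :
    subst ![a, b] (subst ![c, d] f) = subst ![subst ![a, b] c, subst ![a, b] d] f := by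
  rw [subst_comp_subst_apply hcd hab]
  congr 1
  ext i : 1
  fin_cases i <;> rfl

theorem subst_powerSeriesSubst {a : σ → MvPowerSeries τ R} {g : MvPowerSeries σ R}
    (ha : HasSubst a) (hg : PowerSeries.HasSubst g) (f : PowerSeries R) :
    subst a (PowerSeries.subst g f) = PowerSeries.subst (subst a g) f :=
  subst_comp_subst_apply (PowerSeries.hasSubst_iff.1 hg) ha f

theorem subst_pair_subst_X_zero_add_X_one {a b : MvPowerSeries τ R} (hab : HasSubst ![a, b])
    (f : PowerSeries R) :
    subst ![a, b] (f.subst (X 0 + X 1 : MvPowerSeries (Fin 2) R)) = f.subst (a + b) := by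
  rw [subst_powerSeriesSubst hab (.of_constantCoeff_zero (by simp)),
    subst_pair_X_zero_add_X_one hab]

end MvPowerSeries

namespace PowerSeries

variable {τ A : Type*} [CommRing A]

theorem subst_rescale_neg_one {a : MvPowerSeries τ A} (ha : HasSubst a) (f : A⟦X⟧) :
    (rescale (-1) f).subst a = f.subst (-a) := by
  rw [rescale_eq_subst, subst_comp_subst_apply (HasSubst.smul_X' _) ha, subst_smul ha,
    subst_X ha, neg_one_smul]

variable [Algebra ℚ A]

theorem subst_exp_mul_subst_exp {a b : MvPowerSeries τ A} (ha : HasSubst a) (hb : HasSubst b) :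
    (exp A).subst a * (exp A).subst b = (exp A).subst (a + b) := by
  have hX : (exp A).subst (MvPowerSeries.X 0 : MvPowerSeries (Fin 2) A) *
      (exp A).subst (MvPowerSeries.X 1) =
        (exp A).subst (MvPowerSeries.X 0 + MvPowerSeries.X 1) := by
    ext e
    rw [coeff_subst_X_zero_subst_mul_X_one, coeff_subst_X_zero_add_X_one, coeff_exp, coeff_exp,
      coeff_exp, ← map_mul, ← map_natCast (algebraMap ℚ A), ← map_mul]
    congr 1
    field_simp
    norm_cast
    rw [← Nat.choose_mul_factorial_mul_factorial (Nat.le_add_right (e 0) (e 1)),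
      Nat.add_sub_cancel_left]
    ring
  have hab : MvPowerSeries.HasSubst ![a, b] :=
    MvPowerSeries.hasSubst_of_constantCoeff_nilpotent (Fin.forall_fin_two.2 ⟨ha, hb⟩)
  have := congrArg (MvPowerSeries.subst ![a, b]) hX
  rwa [MvPowerSeries.subst_mul hab, MvPowerSeries.subst_powerSeriesSubst hab (HasSubst.X _),
    MvPowerSeries.subst_powerSeriesSubst hab (HasSubst.X _),
    MvPowerSeries.subst_pair_subst_X_zero_add_X_one hab, MvPowerSeries.subst_X hab,
    MvPowerSeries.subst_X hab] at this

variable (A) in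
/-- The power series of `sinh x / x`. -/
def sinhc : A⟦X⟧ := mk fun n => if Even n then algebraMap ℚ A (1 / (n + 1).factorial) else 0

theorem exp_sub_rescale_exp : exp A - rescale (-1) (exp A) = 2 * X * sinhc A := by
  ext n
  rcases n with _ | n
  · rw [map_sub, coeff_rescale, mul_comm 2 X, mul_assoc, coeff_zero_X_mul, pow_zero, one_mul,
      sub_self]
  · rw [mul_comm 2 X, mul_assoc, coeff_succ_X_mul, map_sub, coeff_rescale, coeff_exp,
      ← map_ofNat C 2, coeff_C_mul, sinhc, coeff_mk]
    rcases Nat.even_or_odd n with hn | hn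
    · rw [if_pos hn, hn.add_one.neg_one_pow]
      ring
    · rw [if_neg (Nat.not_even_iff_odd.2 hn), hn.add_one.neg_one_pow]
      ring

theorem rescale_neg_one_sinhc : rescale (-1) (sinhc A) = sinhc A := by
  ext n
  rw [coeff_rescale, sinhc, coeff_mk]
  split_ifs with hn
  · rw [hn.neg_one_pow, one_mul]
  · rw [mul_zero]

theorem isUnit_sinhc : IsUnit (sinhc A) :=
  isUnit_iff_constantCoeff.2 (by simp [sinhc, ← coeff_zero_eq_constantCoeff_apply])

theorem subst_exp_sub_subst_exp_neg {a : MvPowerSeries τ A} (ha : HasSubst a) :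
    (exp A).subst a - (exp A).subst (-a) = 2 * a * (sinhc A).subst a := by
  have := congrArg (substAlgHom ha) (exp_sub_rescale_exp (A := A))
  rwa [map_sub, map_mul, map_mul, map_ofNat, coe_substAlgHom, subst_rescale_neg_one ha,
    subst_X ha] at this

theorem subst_neg_sinhc {a : MvPowerSeries τ A} (ha : HasSubst a) :
    (sinhc A).subst (-a) = (sinhc A).subst a := by
  rw [← subst_rescale_neg_one ha, rescale_neg_one_sinhc]

theorem isUnit_subst_sinhc {a : MvPowerSeries τ A} (ha : HasSubst a) :
    IsUnit ((sinhc A).subst a) := by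
  rw [← coe_substAlgHom ha]
  exact isUnit_sinhc.map _

end PowerSeries

open PowerSeries (sinhc)

theorem deg_eq_degree (d : Fin 2 →₀ ℕ) : deg d = d.degree := by
  simp [deg, Finsupp.degree_eq_sum, Fin.sum_univ_two]

-- The truncation in `sub2` loses nothing: `p ^ i * q ^ j` has order at least `i + j`.
theorem sub2_eq_subst {p q : MvPolynomial (Fin 2) ℂ}
    (hp : constantCoeff (p : MvPowerSeries (Fin 2) ℂ) = 0)
    (hq : constantCoeff (q : MvPowerSeries (Fin 2) ℂ) = 0) (f : MvPowerSeries (Fin 2) ℂ) :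
    sub2 p q f = subst ![(p : MvPowerSeries (Fin 2) ℂ), q] f := by
  set e := (Finsupp.equivFunOnFinite.trans (finTwoArrowEquiv ℕ)).symm
  have he (ij : ℕ × ℕ) : e ij = Finsupp.single 0 ij.1 + Finsupp.single 1 ij.2 := by
    ext i; fin_cases i <;> simp [e]
  have hprod (ij : ℕ × ℕ) : (e ij).prod (fun s n => ![(p : MvPowerSeries (Fin 2) ℂ), q] s ^ n) =
      p ^ ij.1 * q ^ ij.2 := by
    simp [e, Finsupp.prod_fintype]
  ext d
  rw [coeff_subst (hasSubst_pair hp hq), ← finsum_comp_equiv e,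
    finsum_eq_sum_of_support_subset _ (s := range (deg d + 1) ×ˢ range (deg d + 1))]
  · refine sum_congr rfl fun ij _ => ?_
    rw [hprod, he, smul_eq_mul, ← MvPolynomial.coeff_coe, MvPolynomial.coe_mul,
      MvPolynomial.coe_pow, MvPolynomial.coe_pow]
  · intro ij hij
    by_contra hout
    apply hij
    beta_reduce
    simp only [coe_product, coe_range, Set.mem_prod, Set.mem_Iio, not_and_or, not_lt] at hout
    rw [hprod, coeff_pow_mul_pow_of_degree_lt hp hq (by rw [← deg_eq_degree]; omega), smul_zero]

theorem expMv_eq_subst_exp {g : MvPowerSeries (Fin 2) ℂ} (hg : constantCoeff g = 0) :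
    expMv g = (PowerSeries.exp ℂ).subst g := by
  ext d
  rw [PowerSeries.coeff_subst (PowerSeries.HasSubst.of_constantCoeff_zero hg),
    finsum_eq_sum_of_support_subset _ (s := range (deg d + 1))]
  · show ∑ k ∈ range (deg d + 1), coeff d (g ^ k) / (k.factorial : ℂ) = _
    refine sum_congr rfl fun k _ => ?_
    simp [PowerSeries.coeff_exp, div_eq_inv_mul]
  · intro k hk
    contrapose! hk
    simp only [coe_range, Set.mem_Iio, not_lt] at hk
    simp only [Function.mem_support, not_not]
    rw [coeff_pow_of_degree_lt hg (by rw [← deg_eq_degree]; omega), smul_zero]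

theorem s₁_eq_subst (f : MvPowerSeries (Fin 2) ℂ) : s₁ f = subst ![X 1, -X 0 - X 1] f := by
  rw [s₁, sub2_eq_subst (by simp) (by simp)]
  simp

theorem s₂_eq_subst (f : MvPowerSeries (Fin 2) ℂ) : s₂ f = subst ![X 0, -X 0 - X 1] f := by
  rw [s₂, sub2_eq_subst (by simp) (by simp)]
  simp

theorem swapS_eq_subst (f : MvPowerSeries (Fin 2) ℂ) : swapS f = subst ![X 1, X 0] f := by
  rw [swapS, sub2_eq_subst (by simp) (by simp)]
  simp

theorem negS_eq_subst (f : MvPowerSeries (Fin 2) ℂ) : negS f = subst ![-X 0, -X 1] f := by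
  rw [negS, sub2_eq_subst (by simp) (by simp)]
  simp

theorem sub2_X_zero_eq_subst (f : MvPowerSeries (Fin 2) ℂ) :
    sub2 (MvPolynomial.X 0) 0 f = subst ![X 0, 0] f := by
  rw [sub2_eq_subst (by simp) (by simp)]
  simp

theorem expMv_mul_expMv {a b : MvPowerSeries (Fin 2) ℂ} (ha : constantCoeff a = 0)
    (hb : constantCoeff b = 0) : expMv a * expMv b = expMv (a + b) := by
  rw [expMv_eq_subst_exp ha, expMv_eq_subst_exp hb, expMv_eq_subst_exp (by simp [ha, hb]),
    PowerSeries.subst_exp_mul_subst_exp (PowerSeries.HasSubst.of_constantCoeff_zero ha)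
      (PowerSeries.HasSubst.of_constantCoeff_zero hb)]

theorem expMv_sub_expMv_neg {g : MvPowerSeries (Fin 2) ℂ} (hg : constantCoeff g = 0) :
    expMv g - expMv (-g) = 2 * g * (sinhc ℂ).subst g := by
  rw [expMv_eq_subst_exp hg, expMv_eq_subst_exp (by simp [hg]),
    PowerSeries.subst_exp_sub_subst_exp_neg (PowerSeries.HasSubst.of_constantCoeff_zero hg)]

theorem subst_expMv {a b g : MvPowerSeries (Fin 2) ℂ} (ha : constantCoeff a = 0)
    (hb : constantCoeff b = 0) (hg : constantCoeff g = 0) :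
    subst ![a, b] (expMv g) = expMv (subst ![a, b] g) := by
  rw [expMv_eq_subst_exp hg, expMv_eq_subst_exp
    (constantCoeff_subst_eq_zero (hasSubst_pair ha hb) (Fin.forall_fin_two.2 ⟨ha, hb⟩) hg),
    subst_powerSeriesSubst (hasSubst_pair ha hb) (PowerSeries.HasSubst.of_constantCoeff_zero hg)]

theorem hasSubst_s₁ : HasSubst ![(X 1 : MvPowerSeries (Fin 2) ℂ), -X 0 - X 1] :=
  hasSubst_pair (by simp) (by simp)

theorem hasSubst_s₂ : HasSubst ![(X 0 : MvPowerSeries (Fin 2) ℂ), -X 0 - X 1] :=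
  hasSubst_pair (by simp) (by simp)

theorem hasSubst_negS : HasSubst ![(-X 0 : MvPowerSeries (Fin 2) ℂ), -X 1] :=
  hasSubst_pair (by simp) (by simp)

theorem negS_s₁ (f : MvPowerSeries (Fin 2) ℂ) : negS (s₁ f) = s₁ (negS f) := by
  simp only [negS_eq_subst, s₁_eq_subst, subst_pair_subst_pair hasSubst_negS hasSubst_s₁,
    subst_pair_subst_pair hasSubst_s₁ hasSubst_negS, subst_X hasSubst_negS, subst_X hasSubst_s₁,
    subst_neg hasSubst_negS, subst_neg hasSubst_s₁, subst_sub hasSubst_negS,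
    Matrix.cons_val_zero, Matrix.cons_val_one, Matrix.cons_val_fin_one]
  ring_nf

theorem negS_s₂ (f : MvPowerSeries (Fin 2) ℂ) : negS (s₂ f) = s₂ (negS f) := by
  simp only [negS_eq_subst, s₂_eq_subst, subst_pair_subst_pair hasSubst_negS hasSubst_s₂,
    subst_pair_subst_pair hasSubst_s₂ hasSubst_negS, subst_X hasSubst_negS, subst_X hasSubst_s₂,
    subst_neg hasSubst_negS, subst_neg hasSubst_s₂, subst_sub hasSubst_negS,
    Matrix.cons_val_zero, Matrix.cons_val_one, Matrix.cons_val_fin_one]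
  ring_nf

theorem swapS_s₂ (f : MvPowerSeries (Fin 2) ℂ) : swapS (s₂ f) = s₁ f := by
  simp only [swapS_eq_subst, s₂_eq_subst, s₁_eq_subst,
    subst_pair_subst_pair HasSubst.X_X hasSubst_s₂, subst_X HasSubst.X_X,
    subst_neg HasSubst.X_X, subst_sub HasSubst.X_X,
    Matrix.cons_val_zero, Matrix.cons_val_one, Matrix.cons_val_fin_one]
  ring_nf

theorem hexagon_of_negS {F : MvPowerSeries (Fin 2) ℂ} (heven : negS F = F)
    (hF : (X 0 + X 1) * F = X 0 * expMv (X 1) * s₁ F + X 1 * expMv (-X 0) * s₂ F) :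
    (X 0 + X 1) * F = X 0 * expMv (-X 1) * s₁ F + X 1 * expMv (X 0) * s₂ F := by
  have h₁ : negS (s₁ F) = s₁ F := by rw [negS_s₁, heven]
  have h₂ : negS (s₂ F) = s₂ F := by rw [negS_s₂, heven]
  have h := congrArg negS hF
  simp only [negS_eq_subst] at h h₁ h₂ heven
  simp (disch := simp) only [subst_mul hasSubst_negS, subst_add hasSubst_negS,
    subst_neg hasSubst_negS, subst_X hasSubst_negS, subst_expMv, h₁, h₂, heven,
    Matrix.cons_val_zero, Matrix.cons_val_one, neg_neg] at h
  linear_combination -h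

theorem sinhc_mul_s₂ {F : MvPowerSeries (Fin 2) ℂ} (heven : negS F = F)
    (hF : (X 0 + X 1) * F = X 0 * expMv (X 1) * s₁ F + X 1 * expMv (-X 0) * s₂ F) :
    (sinhc ℂ).subst (X 0 + X 1 : MvPowerSeries (Fin 2) ℂ) * s₂ F =
      (sinhc ℂ).subst (X 1 : MvPowerSeries (Fin 2) ℂ) * F := by
  have hF' := hexagon_of_negS heven hF
  have hexp : expMv (X 1) * expMv (X 0) = expMv (X 0 + X 1 : MvPowerSeries (Fin 2) ℂ) := by
    rw [expMv_mul_expMv (by simp) (by simp), add_comm]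
  have hexp' : expMv (-X 1) * expMv (-X 0) = expMv (-(X 0 + X 1) : MvPowerSeries (Fin 2) ℂ) := by
    rw [expMv_mul_expMv (by simp) (by simp), neg_add, add_comm]
  have hsinh := expMv_sub_expMv_neg (g := (X 0 + X 1 : MvPowerSeries (Fin 2) ℂ)) (by simp)
  have hsinh' := expMv_sub_expMv_neg (g := (X 1 : MvPowerSeries (Fin 2) ℂ)) (by simp)
  refine mul_left_cancel₀ (mul_ne_zero (mul_ne_zero two_ne_zero (X_ne_zero 1))
    X_zero_add_X_one_ne_zero) ?_
  -- `e^{-μ} hF - e^{μ} hF'` eliminates `s₁ F`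
  linear_combination expMv (-X 1) * hF - expMv (X 1) * hF' + X 1 * s₂ F * (hexp' - hexp - hsinh)
    + (X 0 + X 1) * F * hsinh'

theorem exists_h_of_hexagon {F : MvPowerSeries (Fin 2) ℂ} (hsym : swapS F = F)
    (heven : negS F = F) (hF0 : sub2 (MvPolynomial.X 0) 0 F = 1)
    (hF : (X 0 + X 1) * F = X 0 * expMv (X 1) * s₁ F + X 1 * expMv (-X 0) * s₂ F) :
    ∃ h : MvPowerSeries (Fin 2) ℂ, swapS h = h ∧ negS h = h ∧ s₂ h = h ∧
      (expMv (X 0) - expMv (-X 0)) * sub2 (MvPolynomial.X 0) 0 h = 2 * X 0 ∧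
      2 * (X 0 + X 1) * F = (expMv (X 0 + X 1) - expMv (-X 0 - X 1)) * h := by
  have hsum : PowerSeries.HasSubst (X 0 + X 1 : MvPowerSeries (Fin 2) ℂ) :=
    .of_constantCoeff_zero (by simp)
  set u := (sinhc ℂ).subst (X 0 + X 1 : MvPowerSeries (Fin 2) ℂ) with hu
  have hunit : IsUnit u := PowerSeries.isUnit_subst_sinhc hsum
  have hunit₁ : IsUnit ((sinhc ℂ).subst (X 1 : MvPowerSeries (Fin 2) ℂ)) :=
    PowerSeries.isUnit_subst_sinhc (.of_constantCoeff_zero (by simp))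
  have hkey := sinhc_mul_s₂ heven hF
  obtain ⟨h, rfl⟩ : u ∣ F := hunit.dvd
  have hu_swap : subst ![X 1, X 0] u = u := by
    rw [hu, subst_pair_subst_X_zero_add_X_one HasSubst.X_X, add_comm]
  have hu_neg : subst ![-X 0, -X 1] u = u := by
    rw [hu, subst_pair_subst_X_zero_add_X_one hasSubst_negS, ← neg_add,
      PowerSeries.subst_neg_sinhc hsum]
  have hu_s₂ : subst ![X 0, -X 0 - X 1] u = (sinhc ℂ).subst (X 1 : MvPowerSeries (Fin 2) ℂ) := by
    rw [hu, subst_pair_subst_X_zero_add_X_one hasSubst_s₂,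
      show (X 0 + (-X 0 - X 1) : MvPowerSeries (Fin 2) ℂ) = -X 1 by ring,
      PowerSeries.subst_neg_sinhc (.of_constantCoeff_zero (by simp))]
  have hu_res : subst ![X 0, 0] u = (sinhc ℂ).subst (X 0 : MvPowerSeries (Fin 2) ℂ) := by
    rw [hu, subst_pair_subst_X_zero_add_X_one HasSubst.X_zero, add_zero]
  simp only [swapS_eq_subst, negS_eq_subst, s₂_eq_subst,
    sub2_X_zero_eq_subst] at hsym heven hF0 hkey ⊢
  rw [subst_mul HasSubst.X_X, hu_swap] at hsym
  rw [subst_mul hasSubst_negS, hu_neg] at heven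
  rw [subst_mul hasSubst_s₂, hu_s₂] at hkey
  rw [subst_mul HasSubst.X_zero, hu_res] at hF0
  refine ⟨h, hunit.mul_left_cancel hsym, hunit.mul_left_cancel heven, ?_, ?_, ?_⟩
  · refine hunit₁.mul_left_cancel (hunit.mul_left_cancel ?_)
    linear_combination hkey
  · rw [expMv_sub_expMv_neg (by simp)]
    linear_combination 2 * X 0 * hF0
  · rw [← neg_add', expMv_sub_expMv_neg (by simp)]
    ring

theorem hexagon_of_exists_h {F h : MvPowerSeries (Fin 2) ℂ} (hswap : swapS h = h)
    (hs₂ : s₂ h = h)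
    (hFh : 2 * (X 0 + X 1) * F = (expMv (X 0 + X 1) - expMv (-X 0 - X 1)) * h) :
    (X 0 + X 1) * F = X 0 * expMv (X 1) * s₁ F + X 1 * expMv (-X 0) * s₂ F := by
  have hs₁ : s₁ h = h := by rw [← swapS_s₂, hs₂, hswap]
  have h₁ := congrArg s₁ hFh
  have h₂ := congrArg s₂ hFh
  simp only [s₁_eq_subst, s₂_eq_subst] at h₁ h₂ hs₁ hs₂ ⊢
  simp (disch := simp) only [subst_mul hasSubst_s₁, subst_sub hasSubst_s₁,
    subst_add hasSubst_s₁, subst_neg hasSubst_s₁, subst_X hasSubst_s₁, subst_ofNat hasSubst_s₁,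
    subst_mul hasSubst_s₂, subst_sub hasSubst_s₂, subst_add hasSubst_s₂, subst_neg hasSubst_s₂,
    subst_X hasSubst_s₂, subst_ofNat hasSubst_s₂, subst_expMv, hs₁, hs₂,
    Matrix.cons_val_zero, Matrix.cons_val_one] at h₁ h₂
  rw [show (X 1 + (-X 0 - X 1) : MvPowerSeries (Fin 2) ℂ) = -X 0 by ring,
    show (-X 1 - (-X 0 - X 1) : MvPowerSeries (Fin 2) ℂ) = X 0 by ring] at h₁
  rw [show (X 0 + (-X 0 - X 1) : MvPowerSeries (Fin 2) ℂ) = -X 1 by ring,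
    show (-X 0 - (-X 0 - X 1) : MvPowerSeries (Fin 2) ℂ) = X 1 by ring] at h₂
  have hexp : expMv (X 1) * expMv (X 0) = expMv (X 0 + X 1 : MvPowerSeries (Fin 2) ℂ) := by
    rw [expMv_mul_expMv (by simp) (by simp), add_comm]
  have hexp' : expMv (-X 0) * expMv (-X 1) = expMv (-X 0 - X 1 : MvPowerSeries (Fin 2) ℂ) := by
    rw [expMv_mul_expMv (by simp) (by simp), sub_eq_add_neg]
  refine mul_left_cancel₀ (two_ne_zero (α := MvPowerSeries (Fin 2) ℂ)) ?_
  linear_combination hFh + expMv (X 1) * h₁ + expMv (-X 0) * h₂ - h * hexp + h * hexp'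

/-- let `F` be symmetric, even, with `F(λ,0) = 1`. Then
`(λ+μ)·F = λe^{μ}·F(μ,−λ−μ) + μe^{−λ}·F(λ,−λ−μ)` holds iff there is `h` with
`h(λ,μ) = h(μ,λ) = h(−λ,−μ) = h(λ,−λ−μ)` and `(e^{λ} − e^{−λ})·h(λ,0) = 2λ`,
such that `2(λ+μ)·F = (e^{λ+μ} − e^{−λ−μ})·h`. -/
theorem even_eq_iff_exists_h (F : MvPowerSeries (Fin 2) ℂ)
    (hsym : swapS F = F) (heven : negS F = F)
    (hF0 : sub2 (MvPolynomial.X 0) 0 F = 1) :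
    (((X 0 : MvPowerSeries (Fin 2) ℂ) + X 1) * F
        = X 0 * expMv (X 1) * s₁ F + X 1 * expMv (-X 0) * s₂ F)
      ↔ ∃ h : MvPowerSeries (Fin 2) ℂ,
          swapS h = h ∧ negS h = h ∧ s₂ h = h ∧
          (expMv (X 0) - expMv (-X 0)) * sub2 (MvPolynomial.X 0) 0 h = 2 * X 0 ∧
          2 * ((X 0 : MvPowerSeries (Fin 2) ℂ) + X 1) * F
            = (expMv (X 0 + X 1) - expMv (-X 0 - X 1)) * h :=
  ⟨exists_h_of_hexagon hsym heven hF0,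
    fun ⟨_, hswap, _, hs₂, _, hFh⟩ => hexagon_of_exists_h hswap hs₂ hFh⟩

end
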